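/- Let p be a prime and let V be a vector space over 𝔽_p (e.g., ⊕_{ℕ} 𝔽_p acting on itself by translation). If φ : V → S¹ is a phase polynomial of degree < k with k ≥ p, meaning Δ_{h₁}⋯Δ_{h_k} φ = 1 for all h_i ∈ V, then φ^p is a phase polynomial of degree < k − p + 1. -/

import Mathlib

/-- The multiplicative derivative `Δ_h φ (x) = φ(x + h) · conj (φ x)` of a complex
valued function on an additive abelian group. -/
def mderC {V : Type*} [AddCommGroup V] (h : V) (φ : V → ℂ) : V → ℂ :=
  fun x => φ (x + h) * (starRingEnd ℂ) (φ x)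

/-!
Viewed as a map into the additive group `Additive Circle`, `φ` turns `Δ_h` into the forward
difference `fwdDiff h` and `φ ^ p` into `p • φ`. As `p • h = 0`, Newton's formula
`ψ (x + p • h) = ∑ C(p,k) Δ_h^k ψ x` gives `∑_{k=1}^{p} C(p,k) Δ_h^k ψ = 0` for every `ψ`.
If `Δ_h^p ψ = 0`, then, since `p ∣ C(p,k)` for `0 < k < p`, applying this to `Δ_h^(j-1) ψ` yields
`p • Δ_h^j ψ = 0` by downward induction on `j ≥ 1`. The case `j = 1`, for `ψ` a `(k-p)`-fold
derivative of `φ`, is the claim.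
-/

open Finset

section FwdDiff

variable {M G : Type*} [AddCommMonoid M] [AddCommGroup G] {h : M} {f : M → G}

lemma fwdDiff_iter_eq_zero_of_le {n m : ℕ} (hf : (fwdDiff h)^[n] f = 0) (hnm : n ≤ m) :
    (fwdDiff h)^[m] f = 0 := by
  obtain ⟨i, rfl⟩ := Nat.exists_eq_add_of_le' hnm
  rw [Function.iterate_add_apply, hf]
  exact Function.iterate_fixed (fwdDiff_const h 0) i

lemma sum_choose_nsmul_fwdDiff_iter_succ_eq_zero {p : ℕ} (hph : p • h = 0) (f : M → G) :
    ∑ k ∈ range p, p.choose (k + 1) • (fwdDiff h)^[k + 1] f = 0 := by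
  funext y
  have newton := shift_eq_sum_fwdDiff_iter h f p y
  rw [hph, add_zero, sum_range_succ'] at newton
  simpa using newton

lemma nsmul_fwdDiff_eq_zero {p : ℕ} (hp : p.Prime) (hph : p • h = 0)
    (hf : (fwdDiff h)^[p] f = 0) : p • fwdDiff h f = 0 := by
  suffices ∀ j, p • (fwdDiff h)^[j + 1] f = 0 from this 0
  refine Nat.strong_decreasing_induction ⟨p, fun m hm => ?_⟩ fun j ih => ?_
  · rw [fwdDiff_iter_eq_zero_of_le hf (by omega), smul_zero]
  have newton := sum_choose_nsmul_fwdDiff_iter_succ_eq_zero hph ((fwdDiff h)^[j] f)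
  rw [sum_eq_single 0 ?_ (by simp [hp.pos])] at newton
  · rwa [zero_add, Nat.choose_one_right, ← Function.iterate_add_apply, add_comm] at newton
  intro k hk hk0
  rw [← Function.iterate_add_apply]
  rcases (Nat.succ_le_of_lt (mem_range.1 hk)).lt_or_eq with hkp | hkp
  · obtain ⟨c, hc⟩ := hp.dvd_choose_self (Nat.succ_ne_zero k) hkp
    rw [hc, mul_comm, mul_smul, show k + 1 + j = k + j + 1 by omega, ih _ (by omega), smul_zero]
  · rw [fwdDiff_iter_eq_zero_of_le hf (by omega), smul_zero]

lemma foldr_fwdDiff_replicate (n : ℕ) (h : M) (f : M → G) :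
    (List.replicate n h).foldr fwdDiff f = (fwdDiff h)^[n] f := by
  induction n with
  | zero => rfl
  | succ n ih => rw [List.replicate_succ, List.foldr_cons, ih, Function.iterate_succ_apply']

lemma foldr_fwdDiff_smul {R : Type*} [Monoid R] [DistribMulAction R G] (L : List M) (r : R)
    (f : M → G) : L.foldr fwdDiff (r • f) = r • L.foldr fwdDiff f :=
  List.foldr_hom (r • ·) fun h g => fwdDiff_const_smul h r g

theorem foldr_fwdDiff_nsmul_eq_zero {p k : ℕ} (hp : p.Prime) (hM : ∀ m : M, p • m = 0)
    (hk : p ≤ k) (hf : ∀ L : List M, L.length = k → L.foldr fwdDiff f = 0)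
    (L : List M) (hL : L.length = k - p + 1) : L.foldr fwdDiff (p • f) = 0 := by
  obtain ⟨a, L, rfl⟩ := List.exists_cons_of_length_eq_add_one hL
  rw [foldr_fwdDiff_smul, List.foldr_cons]
  refine nsmul_fwdDiff_eq_zero hp (hM a) ?_
  rw [← foldr_fwdDiff_replicate, ← List.foldr_append]
  refine hf _ ?_
  simp only [List.length_cons, List.length_append, List.length_replicate] at hL ⊢
  omega

end FwdDiff

section Circle

variable {V : Type*} [AddCommGroup V]

lemma mderC_coe_toMul (h : V) (g : V → Additive Circle) :
    mderC h (fun x => ((g x).toMul : ℂ)) = fun x => ((fwdDiff h g x).toMul : ℂ) := by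
  funext x
  simp only [mderC, fwdDiff, toMul_sub, div_eq_mul_inv, Circle.coe_mul, Circle.coe_inv_eq_conj]

lemma foldr_mderC_coe_toMul (L : List V) (g : V → Additive Circle) :
    L.foldr mderC (fun x => ((g x).toMul : ℂ)) = fun x => ((L.foldr fwdDiff g x).toMul : ℂ) :=
  List.foldr_hom (fun g x => ((g x).toMul : ℂ)) fun h g => mderC_coe_toMul h g

end Circle

/-- **`p`-th powers of phase polynomials drop degree (high characteristic lemma).**
Let `p` be a prime and `V` a vector space over `𝔽_p`.  If `φ : V → S¹` is a phase
polynomial of degree `< k` with `k ≥ p` (i.e. `Δ_{h₁} ⋯ Δ_{h_k} φ = 1` for all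
`h_i ∈ V`), then the pointwise power `φ^p` is a phase polynomial of degree
`< k − p + 1`. -/
theorem pow_p_phasePoly (p : ℕ) (hp : p.Prime) {V : Type*} [AddCommGroup V]
    [Module (ZMod p) V] (k : ℕ) (hk : p ≤ k)
    (φ : V → ℂ) (hu : ∀ x, ‖φ x‖ = 1)
    (hpoly : ∀ h : Fin k → V, ∀ x : V, ((List.ofFn h).foldr mderC φ) x = 1) :
    ∀ h : Fin (k - p + 1) → V, ∀ x : V,
      ((List.ofFn h).foldr mderC (fun x => (φ x) ^ p)) x = 1 := by
  let ψ : V → Additive Circle := fun x => .ofMul ⟨φ x, mem_sphere_zero_iff_norm.2 (hu x)⟩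
  have hψ : ∀ L : List V, L.length = k → L.foldr fwdDiff ψ = 0 := by
    rintro L rfl
    funext y
    have hL := hpoly L.get y
    rw [List.ofFn_get, show φ = fun x => ((ψ x).toMul : ℂ) from rfl,
      foldr_mderC_coe_toMul] at hL
    rwa [Circle.coe_eq_one, toMul_eq_one] at hL
  have hψp : (fun x => φ x ^ p) = fun x => (((p • ψ) x).toMul : ℂ) := by
    funext y
    simp only [Pi.smul_apply, toMul_nsmul, Circle.coe_pow]
    rfl
  intro h x
  rw [hψp, foldr_mderC_coe_toMul, foldr_fwdDiff_nsmul_eq_zero hp (ZModModule.char_nsmul_eq_zero p)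
    hk hψ _ List.length_ofFn]
  simp
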